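/- Fix k ∈ ℕ. (1) Every real x with |x| ≤ (2/3) · 2^(-k) admits a non-adjacent signed digit expansion a with a n = 0 for all n ≤ k. (2) Conversely, if a is a non-adjacent signed digit expansion of x with a n = 0 for all n ≤ k, then |x| ≤ (2/3) · 2^(-k). -/
import Mathlib

/-- `a : ℤ → ℤ` is a signed digit expansion of the real number `x`. -/
def IsSignedDigitExpansion (a : ℤ → ℤ) (x : ℝ) : Prop :=
  (∀ n : ℤ, a n = -1 ∨ a n = 0 ∨ a n = 1) ∧
  (∃ N : ℕ, ∀ n : ℤ, n ≤ -(N : ℤ) → a n = 0) ∧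
  Summable (fun n : ℤ => (a n : ℝ) * (2 : ℝ) ^ (-n)) ∧
  x = ∑' n : ℤ, (a n : ℝ) * (2 : ℝ) ^ (-n)

/-- The expansion is non-adjacent: no two consecutive nonzero digits. -/
def NonAdjacent (a : ℤ → ℤ) : Prop := ∀ n : ℤ, a n = 0 ∨ a (n + 1) = 0

noncomputable def nafDig (y : ℝ) : ℤ :=
  if 1/3 < y then 1 else if y < -(1/3) then -1 else 0

noncomputable def nafY (x : ℝ) : ℕ → ℝ
  | 0 => x
  | m+1 => 2 * nafY x m - (nafDig (nafY x m) : ℝ)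

lemma nafDig_mem (y : ℝ) : nafDig y = -1 ∨ nafDig y = 0 ∨ nafDig y = 1 := by
  unfold nafDig; split_ifs <;> simp

lemma nafDig_eq_zero {y : ℝ} (h : |y| ≤ 1/3) : nafDig y = 0 := by
  rw [abs_le] at h
  unfold nafDig; split_ifs with h1 h2 <;> [linarith [h.2]; linarith [h.1]; rfl]

lemma nafY_bound {x : ℝ} (hx : |x| ≤ 2/3) : ∀ m, |nafY x m| ≤ 2/3 := by
  intro m
  induction m with
  | zero => exact hx
  | succ m ih =>
    show |2 * nafY x m - (nafDig (nafY x m) : ℝ)| ≤ 2/3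
    rw [abs_le] at ih ⊢
    unfold nafDig
    split_ifs with h1 h2 <;> push_cast <;> constructor <;> linarith [ih.1, ih.2]

lemma nafY_small {x : ℝ} (m : ℕ) (hx : |x| ≤ 2/3) (hd : nafDig (nafY x m) ≠ 0) :
    |nafY x (m+1)| ≤ 1/3 := by
  have ih := nafY_bound hx m
  show |2 * nafY x m - (nafDig (nafY x m) : ℝ)| ≤ 1/3
  rw [abs_le] at ih ⊢
  unfold nafDig at hd ⊢
  split_ifs at hd ⊢ with h1 h2 <;> push_cast <;> first
  | exact absurd rfl hd
  | constructor <;> linarith [ih.1, ih.2]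

lemma nafY_sum (x : ℝ) (M : ℕ) :
    x = (∑ j ∈ Finset.range M, (nafDig (nafY x j) : ℝ) * (1/2)^(j+1)) + nafY x M * (1/2)^M := by
  induction M with
  | zero => simp [nafY]
  | succ M ih =>
    rw [Finset.sum_range_succ]
    have : nafY x (M+1) = 2 * nafY x M - (nafDig (nafY x M) : ℝ) := rfl
    rw [this]
    conv_lhs => rw [ih]
    ring

lemma nafHasSum {x : ℝ} (hx : |x| ≤ 2/3) :
    HasSum (fun m : ℕ => (nafDig (nafY x m) : ℝ) * (1/2)^(m+1)) x := by
  have hsum : Summable (fun m : ℕ => (nafDig (nafY x m) : ℝ) * (1/2)^(m+1)) := by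
    apply Summable.of_abs
    apply Summable.of_nonneg_of_le (fun m => abs_nonneg _) (fun m => ?_)
      (summable_geometric_of_lt_one (by norm_num) (by norm_num : (1:ℝ)/2 < 1))
    rw [abs_mul, abs_pow, abs_of_nonneg (by norm_num : (0:ℝ) ≤ 1/2)]
    calc |(nafDig (nafY x m) : ℝ)| * (1/2)^(m+1) ≤ 1 * (1/2)^m := by
          apply mul_le_mul
          · rcases nafDig_mem (nafY x m) with h | h | h <;> rw [h] <;> norm_num
          · apply pow_le_pow_of_le_one (by norm_num) (by norm_num); omega
          · positivity
          · norm_num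
      _ = (1/2)^m := one_mul _
  have h0 : Filter.Tendsto (fun M : ℕ => nafY x M * (1/2)^M) Filter.atTop (nhds 0) := by
    have hg : Filter.Tendsto (fun M : ℕ => (2/3 : ℝ) * (1/2)^M) Filter.atTop (nhds 0) := by
      simpa using (tendsto_pow_atTop_nhds_zero_of_lt_one
        (by norm_num : (0:ℝ) ≤ 1/2) (by norm_num : (1:ℝ)/2 < 1)).const_mul (2/3 : ℝ)
    apply squeeze_zero_norm (fun M => ?_) hg
    rw [Real.norm_eq_abs, abs_mul, abs_pow, abs_of_nonneg (by norm_num : (0:ℝ) ≤ 1/2)]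
    exact mul_le_mul_of_nonneg_right (nafY_bound hx M) (by positivity)
  have htend2 : Filter.Tendsto (fun M => ∑ j ∈ Finset.range M,
      (nafDig (nafY x j) : ℝ) * (1/2)^(j+1)) Filter.atTop (nhds x) := by
    have : (fun M => ∑ j ∈ Finset.range M, (nafDig (nafY x j) : ℝ) * (1/2)^(j+1))
        = fun M => x - nafY x M * (1/2)^M := by
      funext M
      have := nafY_sum x M
      linarith
    rw [this]
    simpa using (tendsto_const_nhds (x := x)).sub h0
  have hx' : ∑' m : ℕ, (nafDig (nafY x m) : ℝ) * (1/2)^(m+1) = x :=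
    tendsto_nhds_unique hsum.hasSum.tendsto_sum_nat htend2
  have h := hsum.hasSum
  rwa [hx'] at h

lemma expKey (k : ℕ) (m : ℕ) :
    (2:ℝ) ^ (-((k:ℤ)+1+(m:ℤ))) = (2:ℝ) ^ (-(k:ℤ)-1) * (1/2)^m := by
  rw [show -((k:ℤ)+1+(m:ℤ)) = (-(k:ℤ)-1) + (-(m:ℤ)) by ring,
    zpow_add₀ (two_ne_zero), zpow_neg, zpow_natCast]
  congr 1
  rw [one_div, inv_pow]

lemma digit_abs_le {a : ℤ} (h : a = -1 ∨ a = 0 ∨ a = 1) : |(a:ℝ)| ≤ 1 := by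
  rcases h with h | h | h <;> rw [h] <;> norm_num

/-- Reals of absolute value at most `(2/3)·2^(-k)` are exactly those admitting
a non-adjacent signed digit expansion vanishing at all positions `n ≤ k`. -/
theorem nonAdjacent_vanishing_iff_small (k : ℕ) :
    (∀ x : ℝ, |x| ≤ (2 / 3) * (2 : ℝ) ^ (-(k : ℤ)) →
      ∃ a : ℤ → ℤ, IsSignedDigitExpansion a x ∧ NonAdjacent a ∧
        ∀ n : ℤ, n ≤ (k : ℤ) → a n = 0) ∧
    (∀ x : ℝ, ∀ a : ℤ → ℤ, IsSignedDigitExpansion a x → NonAdjacent a →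
      (∀ n : ℤ, n ≤ (k : ℤ) → a n = 0) → |x| ≤ (2 / 3) * (2 : ℝ) ^ (-(k : ℤ))) := by
  have he : Function.Injective (fun m : ℕ => (k:ℤ)+1+(m:ℤ)) := by
    intro a b h; simpa using h
  constructor
  · -- existence
    intro x hx
    set x₀ : ℝ := x * 2^k with hx₀def
    have hx₀ : |x₀| ≤ 2/3 := by
      rw [hx₀def, abs_mul, abs_of_nonneg (by positivity : (0:ℝ) ≤ (2:ℝ)^k)]
      calc |x| * 2^k ≤ (2/3) * (2:ℝ)^(-(k:ℤ)) * 2^k :=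
            mul_le_mul_of_nonneg_right hx (by positivity)
        _ = 2/3 := by
            rw [mul_assoc, ← zpow_natCast (2:ℝ) k, ← zpow_add₀ (two_ne_zero)]
            simp
    set d : ℕ → ℤ := fun m => nafDig (nafY x₀ m) with hd
    set a : ℤ → ℤ := fun n => if (k:ℤ)+1 ≤ n then d (n - ((k:ℤ)+1)).toNat else 0 with ha
    have haval : ∀ m : ℕ, a ((k:ℤ)+1+(m:ℤ)) = d m := by
      intro m
      rw [ha]
      simp only [if_pos (by omega : (k:ℤ)+1 ≤ (k:ℤ)+1+(m:ℤ))]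
      congr 1
      omega
    have hazero : ∀ n : ℤ, n ≤ (k:ℤ) → a n = 0 := by
      intro n hn
      rw [ha]; simp only [if_neg (by omega : ¬ ((k:ℤ)+1 ≤ n))]
    -- HasSum
    have h1 : HasSum (fun m : ℕ => (d m : ℝ) * (1/2)^(m+1)) x₀ := nafHasSum hx₀
    have h2 : HasSum (fun m : ℕ => (d m : ℝ) * (2:ℝ)^(-((k:ℤ)+1+(m:ℤ)))) x := by
      have := h1.mul_right ((2:ℝ)^(-(k:ℤ)))
      have hxeq : x₀ * (2:ℝ)^(-(k:ℤ)) = x := by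
        rw [hx₀def, mul_assoc, ← zpow_natCast (2:ℝ) k, ← zpow_add₀ (two_ne_zero)]
        simp
      rw [hxeq] at this
      refine this.congr_fun fun m => ?_
      rw [expKey]
      rw [zpow_sub₀ (two_ne_zero), zpow_one, pow_succ]
      ring
    have h3 : HasSum (fun n : ℤ => (a n : ℝ) * (2:ℝ)^(-n)) x := by
      rw [← Function.Injective.hasSum_iff he ?_]
      · refine h2.congr_fun fun m => ?_
        simp only [Function.comp_apply, haval]
      · intro n hn
        have hn' : ¬ ((k:ℤ)+1 ≤ n) := by
          intro hge
          exact hn ⟨(n - ((k:ℤ)+1)).toNat, by simp; omega⟩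
        rw [ha]
        simp only [if_neg hn', Int.cast_zero, zero_mul]
    refine ⟨a, ⟨?_, ⟨0, fun n hn => hazero n (by omega)⟩, h3.summable, h3.tsum_eq.symm⟩, ?_, hazero⟩
    · intro n
      rw [ha]
      dsimp only
      split_ifs
      · exact nafDig_mem _
      · tauto
    · -- NonAdjacent
      intro n
      by_cases hn : (k:ℤ)+1 ≤ n
      · by_cases h0 : a n = 0
        · exact Or.inl h0
        · right
          set m : ℕ := (n - ((k:ℤ)+1)).toNat with hm
          have hnm : n = (k:ℤ)+1+(m:ℤ) := by omega
          have hdm : d m ≠ 0 := by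
            intro h; apply h0; rw [hnm, haval, h]
          have := nafY_small m hx₀ hdm
          have hnext : d (m+1) = 0 := nafDig_eq_zero this
          have : n + 1 = (k:ℤ)+1+((m+1:ℕ):ℤ) := by push_cast; omega
          rw [this, haval, hnext]
      · exact Or.inl (hazero n (by omega))
  · -- converse
    intro x a hexp hnonadj hvan
    obtain ⟨hdig, -, hsum, hxeq⟩ := hexp
    have hf : HasSum (fun n : ℤ => (a n : ℝ) * (2:ℝ)^(-n)) x := by
      have := hsum.hasSum; rwa [← hxeq] at this
    have hcond : ∀ n ∉ Set.range (fun m : ℕ => (k:ℤ)+1+(m:ℤ)),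
        (a n : ℝ) * (2:ℝ)^(-n) = 0 := by
      intro n hn
      have : n ≤ (k:ℤ) := by
        by_contra hc
        exact hn ⟨(n - ((k:ℤ)+1)).toNat, by simp; omega⟩
      rw [hvan n this]; simp
    have hg : HasSum (fun m : ℕ => (a ((k:ℤ)+1+(m:ℤ)) : ℝ) * (2:ℝ)^(-((k:ℤ)+1+(m:ℤ)))) x :=
      (Function.Injective.hasSum_iff he hcond).2 hf
    set g : ℕ → ℝ := fun m => (a ((k:ℤ)+1+(m:ℤ)) : ℝ) * (2:ℝ)^(-((k:ℤ)+1+(m:ℤ))) with hgdef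
    have hge : Summable (fun j : ℕ => g (2*j)) :=
      hg.summable.comp_injective (fun p q h => by omega)
    have hgo : Summable (fun j : ℕ => g (2*j+1)) :=
      hg.summable.comp_injective (fun p q h => by omega)
    have hsplit : (∑' j, g (2*j)) + (∑' j, g (2*j+1)) = x := by
      rw [tsum_even_add_odd hge hgo, hg.tsum_eq]
    have hb : ∑' j : ℕ, (g (2*j) + g (2*j+1)) = x := by
      rw [Summable.tsum_add hge hgo, hsplit]
    -- bound on pairs
    set A : ℝ := (2:ℝ)^(-(k:ℤ)-1) with hA
    have hApos : 0 < A := by positivity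
    have hpair : ∀ j : ℕ, |g (2*j) + g (2*j+1)| ≤ A * (1/4)^j := by
      intro j
      have e1 : (2:ℝ)^(-((k:ℤ)+1+((2*j:ℕ):ℤ))) = A * (1/4)^j := by
        rw [expKey]; congr 1; rw [pow_mul]; norm_num
      have e2 : (2:ℝ)^(-((k:ℤ)+1+((2*j+1:ℕ):ℤ))) = A * (1/4)^j / 2 := by
        rw [expKey]
        have : ((1:ℝ)/2)^(2*j+1) = (1/4)^j/2 := by
          rw [pow_succ, pow_mul]; norm_num; ring
        rw [this, hA]; ring
      have hq : (0:ℝ) < A * (1/4)^j := by positivity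
      rcases hnonadj ((k:ℤ)+1+((2*j:ℕ):ℤ)) with h | h
      · rw [hgdef]
        simp only [h, Int.cast_zero, zero_mul, zero_add]
        rw [e2, abs_mul,
          abs_of_pos (show (0:ℝ) < A * (1/4)^j / 2 by positivity)]
        calc |(a ((k:ℤ)+1+((2*j+1:ℕ):ℤ)) : ℝ)| * (A * (1/4)^j / 2)
            ≤ 1 * (A * (1/4)^j / 2) :=
              mul_le_mul_of_nonneg_right (digit_abs_le (hdig _)) (by positivity)
          _ ≤ A * (1/4)^j := by linarith
      · have h' : a ((k:ℤ)+1+((2*j+1:ℕ):ℤ)) = 0 := by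
          rw [show ((k:ℤ)+1+((2*j+1:ℕ):ℤ)) = ((k:ℤ)+1+((2*j:ℕ):ℤ)) + 1 by push_cast; ring]
          exact h
        rw [hgdef]
        simp only [h', Int.cast_zero, zero_mul, add_zero]
        rw [e1, abs_mul, abs_of_pos hq]
        calc |(a ((k:ℤ)+1+((2*j:ℕ):ℤ)) : ℝ)| * (A * (1/4)^j)
            ≤ 1 * (A * (1/4)^j) :=
              mul_le_mul_of_nonneg_right (digit_abs_le (hdig _)) (by positivity)
          _ = A * (1/4)^j := one_mul _
    have hsummc : Summable (fun j : ℕ => A * (1/4)^j) :=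
      (summable_geometric_of_lt_one (by norm_num) (by norm_num)).mul_left A
    have hbsum : Summable (fun j : ℕ => g (2*j) + g (2*j+1)) := hge.add hgo
    have habs : |x| ≤ ∑' j : ℕ, A * (1/4)^j := by
      rw [← hb]
      have h1 : |∑' j : ℕ, (g (2*j) + g (2*j+1))| ≤ ∑' j : ℕ, |g (2*j) + g (2*j+1)| := by
        have := norm_tsum_le_tsum_norm (f := fun j : ℕ => g (2*j) + g (2*j+1))
          (by simpa [Real.norm_eq_abs] using summable_norm_iff.2 hbsum)
        simpa [Real.norm_eq_abs] using this
      refine h1.trans (Summable.tsum_le_tsum hpair ?_ hsummc)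
      simpa [Real.norm_eq_abs] using summable_norm_iff.2 hbsum
    have hval : ∑' j : ℕ, A * (1/4)^j = (2/3) * (2:ℝ)^(-(k:ℤ)) := by
      rw [tsum_mul_left, tsum_geometric_of_lt_one (by norm_num) (by norm_num), hA,
        zpow_sub₀ (two_ne_zero), zpow_one]
      norm_num
      ring
    rwa [hval] at habs
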